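/- Fix an integer k ≥ 1, set n = k+1, and let X₁, X₂, … be i.i.d. uniform on [n] = {1,…,n}. Fix i ∈ [k], let τ be the least r ≥ 1 with X_r = i, and let T be the least r ≥ 1 such that every element of [n] ∖ {i} appears among X₁,…,X_r. Then E[min(τ, T)] = k. -/

import Mathlib

/-!
`E[min(τ, T)] = ∑ᵣ P(min(τ, T) > r)`, and `min(τ, T) > r` exactly when the letters of the
first `r` draws form a proper subset of `A = [n] ∖ {i}`. There are `kʳ` words of length `r`
over `A`, of which `ontoCount r A` use every letter of `A`, and `∑ᵣ kʳ / nʳ = n`, so it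
remains to show that `S(A) = ∑ᵣ ontoCount r A / nʳ` equals `1` when `|A| = n - 1`.
Splitting a word by its first letter gives `(n - |A|) S(A) = ∑_{x ∈ A} S(A ∖ {x})`, hence
`S(A) = |A|! / ((n - 1) ⋯ (n - |A|))` by induction on `|A|`, which is `1` for `|A| = n - 1`.
Thus `E[min(τ, T)] = n - 1 = k`.
-/

open MeasureTheory Finset
open scoped ENNReal

/-- The first time `r ≥ 1` (as an element of `[0,∞]`, with value `∞` if there is no such time)
at which the condition `cond r ω` holds. -/
noncomputable def firstTime {Ω : Type*} (cond : ℕ → Ω → Prop) (ω : Ω) : ℝ≥0∞ :=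
  sInf {x : ℝ≥0∞ | ∃ r : ℕ, x = (r : ℝ≥0∞) ∧ 1 ≤ r ∧ cond r ω}

open scoped Nat

section FirstTime

variable {Ω : Type*}

lemma min_firstTime (c₁ c₂ : ℕ → Ω → Prop) (ω : Ω) :
    min (firstTime c₁ ω) (firstTime c₂ ω) = firstTime (fun r ω => c₁ r ω ∨ c₂ r ω) ω := by
  simp only [firstTime, ← sInf_union, ← Set.ofPred_or, and_or_left, exists_or]

lemma firstTime_eq_tsum_indicator {cond : ℕ → Ω → Prop} {ω : Ω}
    (hmono : Monotone (cond · ω)) (h0 : ¬ cond 0 ω) :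
    firstTime cond ω = ∑' r : ℕ, {ω | ¬ cond r ω}.indicator 1 ω := by
  by_cases h : ∃ r, cond r ω
  · classical
    obtain ⟨N, hfind, hcond⟩ : ∃ N : ℕ, firstTime cond ω = N ∧ ∀ r, cond r ω ↔ N ≤ r := by
      refine ⟨Nat.find h, le_antisymm (sInf_le ⟨_, rfl, ?_, Nat.find_spec h⟩) (le_sInf ?_),
        fun r => ⟨Nat.find_min' h, fun hr => hmono hr (Nat.find_spec h)⟩⟩
      · exact Nat.one_le_iff_ne_zero.2 fun h' => h0 (h' ▸ Nat.find_spec h)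
      · rintro _ ⟨s, rfl, -, hs⟩
        exact_mod_cast Nat.find_min' h hs
    have hterm : ∀ r, {ω | ¬ cond r ω}.indicator 1 ω = if r < N then (1 : ℝ≥0∞) else 0 :=
      fun r => by simp [Set.indicator_apply, hcond r]
    rw [hfind, tsum_congr hterm, tsum_eq_sum (s := range N) fun r hr => if_neg (by simpa using hr),
      sum_congr rfl fun r hr => if_pos (mem_range.1 hr)]
    simp
  · push Not at h
    simp [firstTime, h]

lemma lintegral_firstTime [MeasurableSpace Ω] (μ : Measure Ω) {cond : ℕ → Ω → Prop}
    (hmono : ∀ ω, Monotone (cond · ω)) (h0 : ∀ ω, ¬ cond 0 ω)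
    (hmeas : ∀ r, MeasurableSet {ω | ¬ cond r ω}) :
    ∫⁻ ω, firstTime cond ω ∂μ = ∑' r, μ {ω | ¬ cond r ω} := by
  simp_rw [firstTime_eq_tsum_indicator (hmono _) (h0 _)]
  rw [lintegral_tsum fun r => (measurable_one.indicator (hmeas r)).aemeasurable]
  simp_rw [lintegral_indicator_one (hmeas _)]

end FirstTime

lemma monotone_exists_fin (P : ℕ → Prop) : Monotone fun r => ∃ j : Fin r, P j :=
  fun _ _ h ⟨j, hj⟩ => ⟨Fin.castLE h j, hj⟩

lemma measure_preimage_restrict_fin {α : Type*} [MeasurableSpace α] [MeasurableSingletonClass α]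
    {μ : Measure (ℕ → α)} {p : ℝ≥0∞}
    (hμ : ∀ (m : ℕ) (a : Fin m → α), μ {ω | ∀ i : Fin m, ω i = a i} = p ^ m)
    {r : ℕ} (s : Finset (Fin r → α)) :
    μ ((fun ω (j : Fin r) => ω j) ⁻¹' s) = #s * p ^ r := by
  have hrestrict : Measurable fun (ω : ℕ → α) (j : Fin r) => ω j := by fun_prop
  rw [← sum_measure_preimage_singleton s fun a _ => hrestrict (measurableSet_singleton a)]
  simp only [Set.preimage, Set.mem_singleton_iff, funext_iff, hμ, sum_const, nsmul_eq_mul]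

section Words

variable {β : Type*} [DecidableEq β]

lemma image_univ_cons {r : ℕ} (x : β) (b : Fin r → β) :
    univ.image (Fin.cons x b : Fin (r + 1) → β) = insert x (univ.image b) :=
  coe_injective <| by push_cast; simp [Fin.range_cons]

lemma insert_eq_iff_of_mem {x : β} {S A : Finset β} (hx : x ∈ A) :
    insert x S = A ↔ S = A ∨ S = A.erase x := by
  constructor
  · rintro rfl
    by_cases hxS : x ∈ S
    · exact .inl (insert_eq_of_mem hxS).symm
    · exact .inr (erase_insert hxS).symm
  · rintro (rfl | rfl)
    exacts [insert_eq_of_mem hx, insert_erase hx]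

variable [Fintype β]

def ontoCount (r : ℕ) (A : Finset β) : ℕ := #{a : Fin r → β | univ.image a = A}

lemma ontoCount_zero_of_nonempty {A : Finset β} (hA : A.Nonempty) : ontoCount 0 A = 0 := by
  simp [ontoCount, Finset.image_empty, hA.ne_empty.symm]

lemma ontoCount_succ (r : ℕ) (A : Finset β) :
    ontoCount (r + 1) A = ∑ x ∈ A, (ontoCount r A + ontoCount r (A.erase x)) := by
  have hcons : ontoCount (r + 1) A =
      #{p : β × (Fin r → β) | insert p.1 (univ.image p.2) = A} :=
    card_equiv (Fin.consEquiv fun _ => β).symm fun a => by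
      simp [← image_univ_cons]
  rw [hcons, card_filter, Fintype.sum_prod_type]
  simp only [← card_filter]
  rw [← sum_subset (subset_univ A)]
  · refine sum_congr rfl fun x hx => ?_
    simp only [insert_eq_iff_of_mem hx, filter_or]
    rw [card_union_of_disjoint (disjoint_filter.2 fun b _ h h' => ?_)]
    · rfl
    · exact erase_ne_self.2 hx (h'.symm.trans h)
  · intro x _ hx
    simp only [card_eq_zero, filter_eq_empty_iff]
    exact fun b _ h => hx (h ▸ mem_insert_self x _)

lemma card_image_subset (r : ℕ) (A : Finset β) :
    #{a : Fin r → β | univ.image a ⊆ A} = #A ^ r := by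
  rw [← Fintype.card_piFinset_const]
  congr 1
  ext a
  simp [image_subset_iff, Fintype.mem_piFinset]

lemma card_image_ssubset_add_ontoCount (r : ℕ) (A : Finset β) :
    #{a : Fin r → β | univ.image a ⊂ A} + ontoCount r A = #A ^ r := by
  rw [← card_image_subset, ontoCount, ← card_union_of_disjoint]
  · simp only [subset_iff_ssubset_or_eq, filter_or]
  · exact disjoint_filter.2 fun a _ h => h.ne

noncomputable def ontoSeries (n : ℕ) (A : Finset β) : ℝ≥0∞ :=
  ∑' r, (ontoCount r A : ℝ≥0∞) * (n : ℝ≥0∞)⁻¹ ^ r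

lemma ontoCount_le (r : ℕ) (A : Finset β) : ontoCount r A ≤ #A ^ r :=
  card_image_ssubset_add_ontoCount r A ▸ Nat.le_add_left _ _

lemma ontoSeries_ne_top {n : ℕ} {A : Finset β} (hA : #A < n) : ontoSeries n A ≠ ⊤ := by
  have hq : (#A : ℝ≥0∞) * (n : ℝ≥0∞)⁻¹ < 1 := by
    rw [← div_eq_mul_inv, ENNReal.div_lt_iff (by simp; omega) (by simp), one_mul]
    exact_mod_cast hA
  refine ne_top_of_le_ne_top ?_
    (ENNReal.tsum_le_tsum (g := fun r => ((#A : ℝ≥0∞) * (n : ℝ≥0∞)⁻¹) ^ r) fun r => ?_)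
  · rw [ENNReal.tsum_geometric]
    exact ENNReal.inv_ne_top.2 (tsub_pos_of_lt hq).ne'
  · rw [mul_pow]
    gcongr
    exact_mod_cast ontoCount_le r A

lemma ontoSeries_empty (n : ℕ) : ontoSeries n (∅ : Finset β) = 1 := by
  rw [ontoSeries, tsum_eq_single 0 fun r hr => ?_]
  · simp [ontoCount]
  · obtain ⟨r, rfl⟩ := Nat.exists_eq_succ_of_ne_zero hr
    simp [ontoCount_succ]

lemma natCast_mul_ontoSeries {n : ℕ} (hn : n ≠ 0) {A : Finset β} (hA : A.Nonempty) :
    n * ontoSeries n A = ∑ x ∈ A, (ontoSeries n A + ontoSeries n (A.erase x)) := by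
  have hshift : ∀ (y : ℝ≥0∞) (r : ℕ), (n : ℝ≥0∞) * (y * (n : ℝ≥0∞)⁻¹ ^ (r + 1)) =
      y * (n : ℝ≥0∞)⁻¹ ^ r := fun y r => by
    rw [pow_succ', mul_left_comm y, ← mul_assoc, ENNReal.mul_inv_cancel (by simpa) (by simp),
      one_mul]
  have hS : ontoSeries n A = ∑' r, (ontoCount (r + 1) A : ℝ≥0∞) * (n : ℝ≥0∞)⁻¹ ^ (r + 1) := by
    rw [ontoSeries, tsum_eq_zero_add' ENNReal.summable, ontoCount_zero_of_nonempty hA,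
      Nat.cast_zero, zero_mul, zero_add]
  calc (n : ℝ≥0∞) * ontoSeries n A
      = ∑' r, ∑ x ∈ A, ((ontoCount r A : ℝ≥0∞) * (n : ℝ≥0∞)⁻¹ ^ r +
          ontoCount r (A.erase x) * (n : ℝ≥0∞)⁻¹ ^ r) := by
        rw [hS, ← ENNReal.tsum_mul_left]
        refine tsum_congr fun r => ?_
        simp only [ontoCount_succ, Nat.cast_sum, Nat.cast_add, sum_mul, add_mul, mul_sum, mul_add,
          hshift]
    _ = ∑ x ∈ A, (ontoSeries n A + ontoSeries n (A.erase x)) := by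
        rw [Summable.tsum_finsetSum fun _ _ => ENNReal.summable]
        simp only [ENNReal.tsum_add, ontoSeries]

lemma ontoSeries_mul_descFactorial {n : ℕ} {A : Finset β} (hA : #A < n) :
    ontoSeries n A * Nat.descFactorial (n - 1) #A = (#A)! := by
  induction h : #A generalizing A with
  | zero => simp [card_eq_zero.1 h, ontoSeries_empty]
  | succ c ih =>
    have hne : A.Nonempty := card_pos.1 (by omega)
    set S := ontoSeries n A
    set D : ℝ≥0∞ := ((Nat.descFactorial (n - 1) c : ℕ) : ℝ≥0∞)
    have herase : ∀ x ∈ A, ontoSeries n (A.erase x) * D = c ! := fun x hx =>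
      ih (by rw [card_erase_of_mem hx]; omega) (by rw [card_erase_of_mem hx]; omega)
    have hsplit : (n : ℝ≥0∞) = (n - 1 - c : ℕ) + (c + 1 : ℕ) := by
      rw [← Nat.cast_add]; congr 1; omega
    have hfin : (c + 1 : ℕ) * S * D ≠ ⊤ := by
      have := ontoSeries_ne_top hA
      have : D ≠ ⊤ := ENNReal.natCast_ne_top _
      finiteness
    have key : (c + 1 : ℕ) * S * D + (n - 1 - c : ℕ) * S * D = (c + 1 : ℕ) * S * D + (c + 1)! := by
      calc _ = n * S * D := by rw [hsplit]; ring
        _ = (c + 1 : ℕ) * S * D + ∑ x ∈ A, ontoSeries n (A.erase x) * D := by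
          rw [natCast_mul_ontoSeries (by omega) hne, sum_add_distrib, sum_const, h, nsmul_eq_mul,
            add_mul, sum_mul]
        _ = _ := by
          rw [sum_congr rfl herase, sum_const, h, nsmul_eq_mul, Nat.factorial_succ]; push_cast; ring
    rw [Nat.descFactorial_succ, Nat.cast_mul, ← (ENNReal.add_right_inj hfin).1 key]
    ring

lemma ontoSeries_eq_one {n : ℕ} {A : Finset β} (hA : #A + 1 = n) : ontoSeries n A = 1 := by
  subst hA
  have h := ontoSeries_mul_descFactorial (lt_add_one #A)
  rw [Nat.add_sub_cancel, Nat.descFactorial_self] at h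
  exact (ENNReal.mul_eq_right (Nat.cast_ne_zero.2 (Nat.factorial_ne_zero _)) (by simp)).1 h

lemma tsum_card_image_ssubset {n : ℕ} {A : Finset β} (hA : #A + 1 = n) :
    ∑' r, (#{a : Fin r → β | univ.image a ⊂ A} : ℝ≥0∞) * (n : ℝ≥0∞)⁻¹ ^ r = #A := by
  have hgeom : ∑' r, ((#A : ℝ≥0∞) * (n : ℝ≥0∞)⁻¹) ^ r = #A + 1 := by
    have h1 : 1 - (#A : ℝ≥0∞) * (n : ℝ≥0∞)⁻¹ = (n : ℝ≥0∞)⁻¹ := by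
      refine ENNReal.sub_eq_of_eq_add (ENNReal.mul_ne_top (by simp) (by simp; omega)) ?_
      rw [← one_add_mul, add_comm, ← hA, Nat.cast_succ,
        ENNReal.mul_inv_cancel (by positivity) (by simp)]
    rw [ENNReal.tsum_geometric, h1, inv_inv, ← hA, Nat.cast_succ]
  have hsum : ∑' r, (#{a : Fin r → β | univ.image a ⊂ A} : ℝ≥0∞) * (n : ℝ≥0∞)⁻¹ ^ r +
      ontoSeries n A = #A + 1 := by
    rw [ontoSeries, ← ENNReal.tsum_add, ← hgeom]
    refine tsum_congr fun r => ?_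
    rw [← add_mul, mul_pow, ← Nat.cast_add, card_image_ssubset_add_ontoCount, Nat.cast_pow]
  rw [ontoSeries_eq_one hA] at hsum
  exact (ENNReal.add_left_inj ENNReal.one_ne_top).1 hsum

end Words

lemma image_ssubset_univ_erase_iff {β : Type*} [Fintype β] [DecidableEq β] {r : ℕ}
    (a : Fin r → β) (i : β) :
    univ.image a ⊂ univ.erase i ↔ ¬ ((∃ j, a j = i) ∨ ∀ i' ≠ i, ∃ j, a j = i') := by
  have hsub : univ.image a ⊆ univ.erase i ↔ ¬ ∃ j, a j = i := by simp [image_subset_iff]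
  rw [ssubset_iff_subset_ne, hsub, not_or]
  refine and_congr_right fun hi => not_congr ⟨fun h i' hi' => ?_, fun h => ?_⟩
  · have : i' ∈ univ.image a := h ▸ mem_erase.2 ⟨hi', mem_univ i'⟩
    simpa using this
  · refine (hsub.2 hi).antisymm fun x hx => ?_
    simpa using h x (ne_of_mem_erase hx)

theorem simple_parity_code_expected_retrieval_time_general (k : ℕ) (hk : 1 ≤ k)
    (μ : Measure (ℕ → Fin (k + 1)))
    (hμ : ∀ (m : ℕ) (a : Fin m → Fin (k + 1)),
      μ {ω : ℕ → Fin (k + 1) | ∀ i : Fin m, ω (i : ℕ) = a i} =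
        ∏ _i : Fin m, (((k : ℝ≥0∞) + 1))⁻¹)
    (i : Fin (k + 1)) :
    ∫⁻ ω, min (firstTime (fun r ω => ∃ j : Fin r, ω (j : ℕ) = i) ω)
        (firstTime (fun r ω => ∀ i' : Fin (k + 1), i' ≠ i → ∃ j : Fin r, ω (j : ℕ) = i') ω) ∂μ =
      (k : ℝ≥0∞) := by
  let cond : ℕ → (ℕ → Fin (k + 1)) → Prop := fun r ω =>
    (∃ j : Fin r, ω j = i) ∨ ∀ i' ≠ i, ∃ j : Fin r, ω j = i'
  have hbad : ∀ r, {ω | ¬ cond r ω} = (fun ω (j : Fin r) => ω j) ⁻¹'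
      ↑({a : Fin r → Fin (k + 1) | univ.image a ⊂ univ.erase i} : Finset _) := fun r => by
    ext ω; simp [cond, image_ssubset_univ_erase_iff]
  have hmono : ∀ ω, Monotone (cond · ω) := fun ω _ _ hsr =>
    Or.imp (monotone_exists_fin (ω · = i) hsr) fun h i' hi' =>
      monotone_exists_fin (ω · = i') hsr (h i' hi')
  have h0 : ∀ ω, ¬ cond 0 ω := by
    obtain ⟨i', hi'⟩ := Fintype.exists_ne_of_one_lt_card (by rw [Fintype.card_fin]; omega) i
    rintro ω (⟨j, -⟩ | h)
    exacts [j.elim0, (h i' hi').elim fun j _ => j.elim0]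
  have hmeas : ∀ r, MeasurableSet {ω | ¬ cond r ω} := fun r => by
    rw [hbad]
    exact (measurable_pi_lambda _ fun j => measurable_pi_apply _) (Finset.measurableSet _)
  have hμ' : ∀ (m : ℕ) (a : Fin m → Fin (k + 1)),
      μ {ω | ∀ i : Fin m, ω i = a i} = ((k + 1 : ℕ) : ℝ≥0∞)⁻¹ ^ m := fun m a => by
    rw [hμ, prod_const, card_univ, Fintype.card_fin]; push_cast; rfl
  calc _ = ∫⁻ ω, firstTime cond ω ∂μ := by simp_rw [min_firstTime]; rfl
    _ = ∑' r, μ {ω | ¬ cond r ω} := lintegral_firstTime μ hmono h0 hmeas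
    _ = ∑' r, (#{a : Fin r → Fin (k + 1) | univ.image a ⊂ univ.erase i} : ℝ≥0∞) *
          ((k + 1 : ℕ) : ℝ≥0∞)⁻¹ ^ r := by
        simp_rw [hbad, measure_preimage_restrict_fin hμ']
    _ = k := by
        rw [tsum_card_image_ssubset (by simp)]
        simp

/-- Fix `k ≥ 1`, set `n = k+1`, and let `X₁, X₂, …` be i.i.d. uniform on `[n]` (the coordinate
process on `[n]^ℕ` under the infinite uniform product measure `μ`, characterized by its values
on cylinder sets).  Fix `i ∈ [k]`, let `τ` be the least `r ≥ 1` with `X_r = i` and `T` the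
least `r ≥ 1` such that every element of `[n] ∖ {i}` appears among `X₁,…,X_r`.  Then
`E[min(τ, T)] = k` (the expected random-access sample size of the simple parity code). -/
theorem simple_parity_code_expected_retrieval_time (k : ℕ) (hk : 1 ≤ k)
    (μ : Measure (ℕ → Fin (k + 1)))
    (hμ : ∀ (m : ℕ) (a : Fin m → Fin (k + 1)),
      μ {ω : ℕ → Fin (k + 1) | ∀ i : Fin m, ω (i : ℕ) = a i} =
        ∏ _i : Fin m, (((k : ℝ≥0∞) + 1))⁻¹)
    (i : Fin (k + 1)) (hi : (i : ℕ) < k) :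
    ∫⁻ ω, min (firstTime (fun r ω => ∃ j : Fin r, ω (j : ℕ) = i) ω)
        (firstTime (fun r ω => ∀ i' : Fin (k + 1), i' ≠ i → ∃ j : Fin r, ω (j : ℕ) = i') ω) ∂μ =
      (k : ℝ≥0∞) :=
  simple_parity_code_expected_retrieval_time_general k hk μ hμ i
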